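/- Let d ≥ 1 and let (C(x))_{x∈ℝ^d} be a family of closed convex subsets of ℝ^d which is totally ordered by inclusion (for every x, y either C(x) ⊆ C(y) or C(y) ⊆ C(x)) and satisfies, for every x, w ∈ ℝ^d: x ∈ C(x), and w ∈ C(x) implies C(w) ⊆ C(x). Then there exists a lower semi-continuous quasi-convex function f : ℝ^d → ℝ such that {w : f(w) ≤ f(x)} = C(x) for every x ∈ ℝ^d. -/

import Mathlib

/-!
Fix a countable basis `(K n)` and weigh a set by `∑ 2⁻ⁿ` over the basic sets it meets. This
weight is monotone, strictly increasing above a closed set, and the weight of a directed union is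
bounded by the supremum of the weights. Put `f x` equal to the weight of `C x`, unless the union
`L x` of the strictly smaller sets `C w` fails to be closed; then `x` is a limit of strictly lower
points, and lower semicontinuity forces `f x` to be the weight of `L x`, the supremum of the
levels below `x`. Either way `f` is strictly increasing along the nest, which pins down its
sublevel sets; these are unions of a chain of convex sets `C x`, hence convex.
-/

open Set TopologicalSpace

section HitWeight

variable {X : Type*} (K : ℕ → Set X)

def hitIndices (A : Set X) : Set ℕ := {n | (A ∩ K n).Nonempty}

theorem hitIndices_mono {A B : Set X} (h : A ⊆ B) : hitIndices K A ⊆ hitIndices K B :=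
  fun _ hn => hn.mono (inter_subset_inter_left _ h)

noncomputable def hitWeight (A : Set X) : ℝ :=
  ∑' n, (hitIndices K A).indicator (fun n => ((1 : ℝ) / 2) ^ n) n

theorem summable_hitWeight (A : Set X) :
    Summable fun n => (hitIndices K A).indicator (fun n => ((1 : ℝ) / 2) ^ n) n :=
  summable_geometric_two.indicator _

theorem hitWeight_mono {A B : Set X} (h : A ⊆ B) : hitWeight K A ≤ hitWeight K B :=
  (summable_hitWeight K A).tsum_le_tsum
    (fun _ => indicator_le_indicator_of_subset (hitIndices_mono K h) (fun _ => by positivity) _)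
    (summable_hitWeight K B)

theorem hitWeight_lt_of_ssubset [TopologicalSpace X] (hK : IsTopologicalBasis (range K))
    {A B : Set X} (hA : IsClosed A) (h : A ⊂ B) : hitWeight K A < hitWeight K B := by
  obtain ⟨b, hbB, hbA⟩ := exists_of_ssubset h
  obtain ⟨_, ⟨n, rfl⟩, hbn, hnA⟩ := hK.exists_subset_of_mem_open hbA hA.isOpen_compl
  have hnA : n ∉ hitIndices K A := fun ⟨a, haA, han⟩ => hnA han haA
  have hnB : n ∈ hitIndices K B := ⟨b, hbB, hbn⟩
  refine (summable_hitWeight K A).tsum_lt_tsum (i := n)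
    (fun _ => indicator_le_indicator_of_subset (hitIndices_mono K h.subset)
      (fun _ => by positivity) _) ?_ (summable_hitWeight K B)
  rw [indicator_of_notMem hnA, indicator_of_mem hnB]
  positivity

theorem hitWeight_biUnion_le {ι : Type*} {F : ι → Set X} {c : Set ι} (hc : c.Nonempty)
    (hdir : DirectedOn (fun i j => F i ⊆ F j) c) {ℓ : ℝ}
    (hℓ : ∀ i ∈ c, hitWeight K (F i) ≤ ℓ) : hitWeight K (⋃ i ∈ c, F i) ≤ ℓ := by
  classical
  set U := ⋃ i ∈ c, F i
  refine (summable_hitWeight K U).tsum_le_of_sum_le fun s => ?_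
  obtain ⟨i, hi, hsi⟩ := DirectedOn.exists_mem_subset_of_finset_subset_biUnion
    (f := fun i => hitIndices K (F i)) hc (hdir.mono fun _ _ => hitIndices_mono K)
    (s := s.filter (· ∈ hitIndices K U)) fun n hn => by
      simpa [U, hitIndices, iUnion_inter, nonempty_iUnion] using (Finset.mem_filter.1 hn).2
  calc ∑ n ∈ s, (hitIndices K U).indicator (fun n => ((1 : ℝ) / 2) ^ n) n
      ≤ ∑ n ∈ s, (hitIndices K (F i)).indicator (fun n => ((1 : ℝ) / 2) ^ n) n :=
        Finset.sum_le_sum fun n hn => indicator_apply_le'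
          (fun hnU => (indicator_of_mem (hsi (Finset.mem_filter.2 ⟨hn, hnU⟩)) _).ge)
          (fun _ => indicator_nonneg (fun _ _ => by positivity) _)
    _ ≤ hitWeight K (F i) := (summable_hitWeight K _).sum_le_tsum s
        fun _ _ => indicator_nonneg (fun _ _ => by positivity) _
    _ ≤ ℓ := hℓ i hi

end HitWeight

structure IsNest {X : Type*} (C : X → Set X) : Prop where
  subset_total : ∀ x y, C x ⊆ C y ∨ C y ⊆ C x
  mem_self : ∀ x, x ∈ C x
  subset_of_mem : ∀ {x w}, w ∈ C x → C w ⊆ C x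

def strictBelow {X : Type*} (C : X → Set X) (x : X) : Set X := {w | C w ⊂ C x}

open Classical in
noncomputable def nestLevel {X : Type*} [TopologicalSpace X] (K : ℕ → Set X) (C : X → Set X)
    (x : X) : ℝ :=
  if IsClosed (strictBelow C x) then hitWeight K (C x) else hitWeight K (strictBelow C x)

namespace IsNest

variable {X : Type*} {C : X → Set X}

theorem ssubset_of_notMem (hC : IsNest C) {w x : X} (h : w ∉ C x) : C x ⊂ C w :=
  have hwx : ¬C w ⊆ C x := fun hwx => h (hwx (hC.mem_self w))
  ⟨(hC.subset_total x w).resolve_right hwx, hwx⟩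

theorem directedOn (hC : IsNest C) (s : Set X) : DirectedOn (fun i j => C i ⊆ C j) s :=
  fun a ha b hb => (hC.subset_total a b).elim (fun h => ⟨b, hb, h, subset_rfl⟩)
    fun h => ⟨a, ha, subset_rfl, h⟩

theorem strictBelow_subset (hC : IsNest C) (x : X) : strictBelow C x ⊆ C x :=
  fun w hw => hw.1 (hC.mem_self w)

theorem subset_strictBelow (hC : IsNest C) {w x : X} (h : C w ⊂ C x) : C w ⊆ strictBelow C x :=
  fun _ hv => (hC.subset_of_mem hv).trans_ssubset h

theorem strictBelow_eq_biUnion (hC : IsNest C) (x : X) :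
    strictBelow C x = ⋃ w ∈ strictBelow C x, C w :=
  Subset.antisymm (fun w hw => mem_biUnion hw (hC.mem_self w))
    (iUnion₂_subset fun _ hw => hC.subset_strictBelow hw)

theorem convex_sublevel {E : Type*} [AddCommGroup E] [Module ℝ E] {C : E → Set E} (hC : IsNest C)
    (hconvex : ∀ x, Convex ℝ (C x)) {f : E → ℝ} (hf : ∀ {w x}, w ∈ C x → f w ≤ f x) (ℓ : ℝ) :
    Convex ℝ {x | f x ≤ ℓ} := by
  intro x hx y hy a b ha hb hab
  rcases hC.subset_total x y with h | h
  · exact (hf (hconvex y (h (hC.mem_self x)) (hC.mem_self y) ha hb hab)).trans hy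
  · exact (hf (hconvex x (hC.mem_self x) (h (hC.mem_self y)) ha hb hab)).trans hx

variable [TopologicalSpace X] (K : ℕ → Set X)

theorem nestLevel_le_hitWeight (hC : IsNest C) (x : X) : nestLevel K C x ≤ hitWeight K (C x) := by
  unfold nestLevel
  split_ifs
  exacts [le_rfl, hitWeight_mono K (hC.strictBelow_subset x)]

theorem hitWeight_strictBelow_le_nestLevel (hC : IsNest C) (x : X) :
    hitWeight K (strictBelow C x) ≤ nestLevel K C x := by
  unfold nestLevel
  split_ifs
  exacts [hitWeight_mono K (hC.strictBelow_subset x), le_rfl]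

theorem nestLevel_congr {w x : X} (h : C w = C x) : nestLevel K C w = nestLevel K C x := by
  unfold nestLevel strictBelow
  rw [h]

variable {K}

theorem nestLevel_lt (hC : IsNest C) (hclosed : ∀ x, IsClosed (C x))
    (hK : IsTopologicalBasis (range K)) {w x : X} (h : C w ⊂ C x) :
    nestLevel K C w < nestLevel K C x := by
  refine (hC.nestLevel_le_hitWeight K w).trans_lt ?_
  unfold nestLevel
  split_ifs with hbelow
  · exact hitWeight_lt_of_ssubset K hK (hclosed w) h
  · refine hitWeight_lt_of_ssubset K hK (hclosed w) ((hC.subset_strictBelow h).ssubset_of_ne ?_)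
    rintro heq
    exact hbelow (heq ▸ hclosed w)

theorem nestLevel_mono (hC : IsNest C) (hclosed : ∀ x, IsClosed (C x))
    (hK : IsTopologicalBasis (range K)) {w x : X} (h : C w ⊆ C x) :
    nestLevel K C w ≤ nestLevel K C x := by
  rcases h.ssubset_or_eq with h | h
  exacts [(hC.nestLevel_lt hclosed hK h).le, (nestLevel_congr K h).le]

theorem nestLevel_le_nestLevel_iff (hC : IsNest C) (hclosed : ∀ x, IsClosed (C x))
    (hK : IsTopologicalBasis (range K)) {w x : X} :
    nestLevel K C w ≤ nestLevel K C x ↔ w ∈ C x :=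
  ⟨fun h => by_contra fun hw => (hC.nestLevel_lt hclosed hK (hC.ssubset_of_notMem hw)).not_ge h,
    fun h => hC.nestLevel_mono hclosed hK (hC.subset_of_mem h)⟩

theorem lowerSemicontinuous_nestLevel (hC : IsNest C) (hclosed : ∀ x, IsClosed (C x))
    (hK : IsTopologicalBasis (range K)) : LowerSemicontinuous (nestLevel K C) := by
  refine lowerSemicontinuous_iff_isClosed_preimage.2 fun ℓ =>
    isClosed_of_closure_subset fun v hv => ?_
  set S := nestLevel K C ⁻¹' Iic ℓ
  by_cases hup : ∃ u ∈ S, v ∈ C u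
  · obtain ⟨u, hu, hvu⟩ := hup
    exact (hC.nestLevel_mono hclosed hK (hC.subset_of_mem hvu)).trans hu
  push Not at hup
  have hSbelow : S ⊆ strictBelow C v := fun u hu => hC.ssubset_of_notMem (hup u hu)
  have hnotClosed : ¬IsClosed (strictBelow C v) := fun h =>
    ssubset_irrefl (C v) (h.closure_subset_iff.2 hSbelow hv)
  have hcofinal : ∀ w ∈ strictBelow C v, ∃ u ∈ S, C w ⊂ C u := by
    intro w hw
    by_contra! h
    have hSw : S ⊆ C w := fun u hu => by_contra fun hwu => h u hu (hC.ssubset_of_notMem hwu)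
    exact hw.2 (hC.subset_of_mem ((hclosed w).closure_subset_iff.2 hSw hv))
  change nestLevel K C v ≤ ℓ
  rw [nestLevel, if_neg hnotClosed, hC.strictBelow_eq_biUnion v]
  refine hitWeight_biUnion_le K ((closure_nonempty_iff.1 ⟨v, hv⟩).mono hSbelow)
    (hC.directedOn _) fun w hw => ?_
  obtain ⟨u, hu, hwu⟩ := hcofinal w hw
  calc hitWeight K (C w) ≤ hitWeight K (strictBelow C u) := hitWeight_mono K (hC.subset_strictBelow hwu)
    _ ≤ nestLevel K C u := hC.hitWeight_strictBelow_le_nestLevel K u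
    _ ≤ ℓ := hu

end IsNest

theorem stmt3 (d : ℕ)
    (C : EuclideanSpace ℝ (Fin d) → Set (EuclideanSpace ℝ (Fin d)))
    (hclosed : ∀ x, IsClosed (C x)) (hconvex : ∀ x, Convex ℝ (C x))
    (hordered : ∀ x y, C x ⊆ C y ∨ C y ⊆ C x)
    (hmem : ∀ x, x ∈ C x)
    (htrans : ∀ x w, w ∈ C x → C w ⊆ C x) :
    ∃ f : EuclideanSpace ℝ (Fin d) → ℝ, LowerSemicontinuous f ∧
      (∀ ℓ : ℝ, Convex ℝ {x | f x ≤ ℓ}) ∧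
      ∀ x, {w | f w ≤ f x} = C x := by
  have hC : IsNest C := ⟨hordered, hmem, htrans _ _⟩
  obtain ⟨K, hK⟩ := exists_seq_basis (EuclideanSpace ℝ (Fin d))
  refine ⟨nestLevel K C, hC.lowerSemicontinuous_nestLevel hclosed hK,
    hC.convex_sublevel hconvex fun h => (hC.nestLevel_le_nestLevel_iff hclosed hK).2 h,
    fun x => ?_⟩
  ext w
  exact hC.nestLevel_le_nestLevel_iff hclosed hK
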